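/- Let f(z) = Σ_{k≥0} a_k z^k be an analytic polynomial of one variable and let 0 < r < 1. Then Σ_{k≥0} r^{2k} | Σ_{j=0}^{k} a_j |² ≤ (1 − r²)^{−1} · (sup{ |f(z)| : |z| = 1 })². -/

import Mathlib

/-- `f(z) = Σ_{k ≤ d} a_k z^k`. -/
noncomputable def polyEval1 (d : ℕ) (a : ℕ → ℂ) (z : ℂ) : ℂ :=
  ∑ k ∈ Finset.range (d + 1), a k * z ^ k

/-- `sup { |f(z)| : |z| = 1 }`. -/
noncomputable def supNormT1 (d : ℕ) (a : ℕ → ℂ) : ℝ :=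
  sSup {x : ℝ | ∃ z : ℂ, ‖z‖ = 1 ∧ x = ‖polyEval1 d a z‖}

/-! For `q_N = 1 + z + ⋯ + z^(N-1)`, the coefficients of `f q_N` below `N` are the partial
sums `Σ_{j ≤ k} a_j`. Averaging `|p|²` over `r` times the `P`-th roots of unity, with `P` beyond
the degree, gives `Σ_k |p_k|² r^(2k)` (a discrete Parseval identity), and on the circle of radius
`r` the maximum modulus principle gives `|f| ≤ M := sup_{|z|=1} |f|`. Hence
`Σ_{k<N} r^(2k) |Σ_{j≤k} a_j|² ≤ M² Σ_{k<N} r^(2k) ≤ M² / (1 - r²)` for every `N`. -/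

open Complex ComplexConjugate Finset Polynomial
theorem IsPrimitiveRoot.sum_pow_div_pow_pow {K : Type*} [Field K] {ζ : K} {P : ℕ}
    (hζ : IsPrimitiveRoot ζ P) {j k : ℕ} (hj : j < P) (hk : k < P) :
    ∑ m ∈ range P, (ζ ^ j / ζ ^ k) ^ m = if j = k then (P : K) else 0 := by
  have hζk : ζ ^ k ≠ 0 := pow_ne_zero _ (hζ.ne_zero (by omega))
  split_ifs with hjk
  · simp [hjk, div_self hζk]
  · have hne : ζ ^ j / ζ ^ k ≠ 1 := fun h => hjk (hζ.pow_inj hj hk ((div_eq_one_iff_eq hζk).mp h))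
    rw [geom_sum_eq hne, div_pow, ← pow_mul, ← pow_mul, mul_comm j, mul_comm k, pow_mul, pow_mul,
      hζ.pow_eq_one]
    simp

theorem IsPrimitiveRoot.sum_norm_sq_sum_mul_pow {ζ : ℂ} {P : ℕ} (hζ : IsPrimitiveRoot ζ P)
    (b : ℕ → ℂ) :
    ∑ m ∈ range P, ‖∑ k ∈ range P, b k * (ζ ^ m) ^ k‖ ^ 2 = P * ∑ k ∈ range P, ‖b k‖ ^ 2 := by
  rcases P.eq_zero_or_pos with rfl | hP
  · simp
  have hconj : conj ζ = ζ⁻¹ := (inv_eq_conj (hζ.norm'_eq_one hP.ne')).symm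
  apply ofReal_injective
  push_cast [← mul_conj']
  calc ∑ m ∈ range P, (∑ j ∈ range P, b j * (ζ ^ m) ^ j) * conj (∑ k ∈ range P, b k * (ζ ^ m) ^ k)
      = ∑ j ∈ range P, ∑ k ∈ range P, b j * conj (b k) * ∑ m ∈ range P, (ζ ^ j / ζ ^ k) ^ m := by
        simp_rw [map_sum, map_mul, map_pow, hconj, sum_mul_sum, mul_sum]
        rw [sum_comm]
        refine sum_congr rfl fun j _ => ?_
        rw [sum_comm]
        refine sum_congr rfl fun k _ => sum_congr rfl fun m _ => ?_
        rw [div_pow, ← pow_mul, ← pow_mul, ← pow_mul]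
        ring
    _ = ∑ j ∈ range P, b j * conj (b j) * P := by
        refine sum_congr rfl fun j hj => ?_
        rw [sum_eq_single_of_mem j hj fun k hk hkj => ?_]
        · rw [hζ.sum_pow_div_pow_pow (mem_range.1 hj) (mem_range.1 hj), if_pos rfl]
        · rw [hζ.sum_pow_div_pow_pow (mem_range.1 hj) (mem_range.1 hk), if_neg hkj.symm, mul_zero]
    _ = P * ∑ k ∈ range P, b k * conj (b k) := by
        rw [mul_sum]; exact sum_congr rfl fun _ _ => mul_comm _ _

theorem Polynomial.sum_norm_sq_eval_mul_pow {ζ : ℂ} {P : ℕ} (hζ : IsPrimitiveRoot ζ P)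
    {p : ℂ[X]} (hp : p.natDegree < P) (z : ℂ) :
    ∑ m ∈ range P, ‖p.eval (z * ζ ^ m)‖ ^ 2 = P * ∑ k ∈ range P, ‖p.coeff k‖ ^ 2 * ‖z‖ ^ (2 * k) := by
  simp_rw [eval_eq_sum_range' hp, mul_pow, ← mul_assoc, hζ.sum_norm_sq_sum_mul_pow, norm_mul,
    norm_pow, mul_pow, ← pow_mul, mul_comm _ 2]

theorem Polynomial.sum_norm_sq_coeff_mul_le {f g : ℂ[X]} {z : ℂ} {M : ℝ}
    (hf : ∀ w : ℂ, ‖w‖ = ‖z‖ → ‖f.eval w‖ ≤ M) {P : ℕ} (hP : f.natDegree + g.natDegree < P) :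
    ∑ k ∈ range P, ‖(f * g).coeff k‖ ^ 2 * ‖z‖ ^ (2 * k) ≤
      M ^ 2 * ∑ k ∈ range P, ‖g.coeff k‖ ^ 2 * ‖z‖ ^ (2 * k) := by
  have hP0 : P ≠ 0 := by omega
  obtain ⟨ζ, hζ⟩ : ∃ ζ : ℂ, IsPrimitiveRoot ζ P := ⟨_, Complex.isPrimitiveRoot_exp P hP0⟩
  refine le_of_mul_le_mul_left ?_ (by positivity : (0 : ℝ) < P)
  rw [← sum_norm_sq_eval_mul_pow hζ (natDegree_mul_le.trans_lt hP), mul_left_comm,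
    ← sum_norm_sq_eval_mul_pow hζ (by omega), mul_sum]
  refine sum_le_sum fun m _ => ?_
  rw [eval_mul, norm_mul, mul_pow]
  have hM : ‖f.eval (z * ζ ^ m)‖ ≤ M :=
    hf _ (by rw [norm_mul, norm_pow, hζ.norm'_eq_one hP0, one_pow, mul_one])
  gcongr

theorem Polynomial.norm_eval_le_of_forall_norm_eq_one {p : ℂ[X]} {M : ℝ}
    (hp : ∀ w : ℂ, ‖w‖ = 1 → ‖p.eval w‖ ≤ M) {z : ℂ} (hz : ‖z‖ ≤ 1) : ‖p.eval z‖ ≤ M :=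
  Complex.norm_le_of_forall_mem_frontier_norm_le (Metric.isBounded_ball (x := 0) (r := 1))
    p.differentiable.diffContOnCl
    (fun w hw => hp w (by rwa [frontier_ball (0 : ℂ) one_ne_zero, mem_sphere_zero_iff_norm] at hw))
    (by rwa [closure_ball (0 : ℂ) one_ne_zero, mem_closedBall_zero_iff])

noncomputable def geomPoly (R : Type*) [Semiring R] (N : ℕ) : R[X] := ∑ i ∈ range N, X ^ i

theorem coeff_geomPoly (R : Type*) [Semiring R] (N k : ℕ) :
    (geomPoly R N).coeff k = if k < N then 1 else 0 := by
  simp [geomPoly, finsetSum_coeff, coeff_X_pow]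

theorem natDegree_geomPoly_le (R : Type*) [Semiring R] (N : ℕ) : (geomPoly R N).natDegree ≤ N :=
  natDegree_sum_le_of_forall_le _ _ fun i hi => (natDegree_X_pow_le i).trans (mem_range.1 hi).le

theorem coeff_mul_geomPoly {R : Type*} [Semiring R] (f : R[X]) {N k : ℕ} (hk : k < N) :
    (f * geomPoly R N).coeff k = ∑ j ∈ range (k + 1), f.coeff j := by
  rw [coeff_mul, Nat.sum_antidiagonal_eq_sum_range_succ_mk]
  refine sum_congr rfl fun j hj => ?_
  rw [coeff_geomPoly, if_pos (by omega), mul_one]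

theorem sum_norm_sq_coeff_geomPoly_mul_pow_le {r : ℝ} (hr0 : 0 ≤ r) (hr1 : r < 1) (N P : ℕ) :
    ∑ k ∈ range P, ‖(geomPoly ℂ N).coeff k‖ ^ 2 * r ^ (2 * k) ≤ (1 - r ^ 2)⁻¹ := by
  calc ∑ k ∈ range P, ‖(geomPoly ℂ N).coeff k‖ ^ 2 * r ^ (2 * k)
      ≤ ∑ k ∈ range P, (r ^ 2) ^ k := sum_le_sum fun k _ => by
        rw [coeff_geomPoly, ← pow_mul]
        split_ifs <;> simp
        positivity
    _ ≤ (r ^ 2) ^ 0 / (1 - r ^ 2) := by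
        rw [range_eq_Ico]
        exact geom_sum_Ico_le_of_lt_one (sq_nonneg r) (by nlinarith)
    _ = (1 - r ^ 2)⁻¹ := by rw [pow_zero, one_div]

theorem Polynomial.sum_range_mul_norm_sq_sum_coeff_le {f : ℂ[X]} {r M : ℝ} (hr0 : 0 ≤ r)
    (hr1 : r < 1) (hf : ∀ w : ℂ, ‖w‖ = r → ‖f.eval w‖ ≤ M) (N : ℕ) :
    ∑ k ∈ range N, r ^ (2 * k) * ‖∑ j ∈ range (k + 1), f.coeff j‖ ^ 2 ≤ (1 - r ^ 2)⁻¹ * M ^ 2 := by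
  have hr : ‖(r : ℂ)‖ = r := Complex.norm_of_nonneg hr0
  have hP : f.natDegree + (geomPoly ℂ N).natDegree < f.natDegree + N + 1 := by
    have := natDegree_geomPoly_le ℂ N
    omega
  calc ∑ k ∈ range N, r ^ (2 * k) * ‖∑ j ∈ range (k + 1), f.coeff j‖ ^ 2
      = ∑ k ∈ range N, ‖(f * geomPoly ℂ N).coeff k‖ ^ 2 * ‖(r : ℂ)‖ ^ (2 * k) :=
        sum_congr rfl fun k hk => by rw [coeff_mul_geomPoly f (mem_range.1 hk), hr, mul_comm]
    _ ≤ ∑ k ∈ range (f.natDegree + N + 1),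
          ‖(f * geomPoly ℂ N).coeff k‖ ^ 2 * ‖(r : ℂ)‖ ^ (2 * k) :=
        sum_le_sum_of_subset_of_nonneg (range_subset_range.2 (by omega))
          fun _ _ _ => by positivity
    _ ≤ M ^ 2 * ∑ k ∈ range (f.natDegree + N + 1),
          ‖(geomPoly ℂ N).coeff k‖ ^ 2 * ‖(r : ℂ)‖ ^ (2 * k) :=
        sum_norm_sq_coeff_mul_le (fun w hw => hf w (hw.trans hr)) hP
    _ ≤ M ^ 2 * (1 - r ^ 2)⁻¹ := by
        rw [hr]
        gcongr
        exact sum_norm_sq_coeff_geomPoly_mul_pow_le hr0 hr1 N _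
    _ = (1 - r ^ 2)⁻¹ * M ^ 2 := mul_comm _ _

noncomputable def polyOfCoeffs (d : ℕ) (a : ℕ → ℂ) : ℂ[X] :=
  ∑ k ∈ range (d + 1), C (a k) * X ^ k

theorem eval_polyOfCoeffs (d : ℕ) (a : ℕ → ℂ) (z : ℂ) :
    (polyOfCoeffs d a).eval z = polyEval1 d a z := by
  simp [polyOfCoeffs, polyEval1, eval_finsetSum]

theorem coeff_polyOfCoeffs {d : ℕ} {a : ℕ → ℂ} (ha : ∀ k : ℕ, d < k → a k = 0) (n : ℕ) :
    (polyOfCoeffs d a).coeff n = a n := by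
  simp only [polyOfCoeffs, finsetSum_coeff, coeff_C_mul_X_pow, sum_ite_eq, mem_range]
  split_ifs with hn
  · rfl
  · exact (ha n (by omega)).symm

theorem norm_polyEval1_le_supNormT1 (d : ℕ) (a : ℕ → ℂ) {z : ℂ} (hz : ‖z‖ = 1) :
    ‖polyEval1 d a z‖ ≤ supNormT1 d a := by
  refine le_csSup ⟨∑ k ∈ range (d + 1), ‖a k‖, ?_⟩ ⟨z, hz, rfl⟩
  rintro _ ⟨w, hw, rfl⟩
  refine (norm_sum_le _ _).trans (sum_le_sum fun k _ => ?_)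
  simp [hw]

/-- For an analytic polynomial `f(z) = Σ a_k z^k` and `0 < r < 1`,
`Σ_{k≥0} r^{2k} |Σ_{j=0}^k a_j|² ≤ (1 − r²)⁻¹ ‖f‖²_{H∞}`. -/
theorem weighted_square_sum_of_partial_sums_le
    (d : ℕ) (a : ℕ → ℂ) (ha : ∀ k : ℕ, d < k → a k = 0)
    (r : ℝ) (hr0 : 0 < r) (hr1 : r < 1) :
    ∑' k : ℕ, r ^ (2 * k) * ‖∑ j ∈ Finset.range (k + 1), a j‖ ^ 2 ≤
      (1 - r ^ 2)⁻¹ * (supNormT1 d a) ^ 2 := by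
  have hf : ∀ w : ℂ, ‖w‖ = r → ‖(polyOfCoeffs d a).eval w‖ ≤ supNormT1 d a := fun w hw =>
    norm_eval_le_of_forall_norm_eq_one
      (fun u hu => eval_polyOfCoeffs d a u ▸ norm_polyEval1_le_supNormT1 d a hu) (hw ▸ hr1.le)
  refine Real.tsum_le_of_sum_range_le (fun k => by positivity) fun N => ?_
  simpa only [coeff_polyOfCoeffs ha] using sum_range_mul_norm_sq_sum_coeff_le hr0.le hr1 hf N
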